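/- Fix an initial state x ∈ ℝ^n, μ ≥ 0, ε ≥ 0, controller parameters α₁ ∈ ℝ^{m×n}, α₂ ∈ ℝ^m, and a horizon N. The following are equivalent: (i) for every disturbance sequence d(0), …, d(N−1) with ‖d(i)‖∞ ≤ μ for all i, the closed-loop trajectory x(0) = x, x(k+1) = A_k x(k) + B_k (α₁ x(k) + α₂) + d(k) satisfies G_k x(k) ≤ H_k for all k = 0, …, N and ‖α₁ x(k) + α₂‖∞ ≤ ε for all k = 0, …, N−1; (ii) there exists a matrix P ∈ ℝ^{((N+1)q + 2mN) × 2n(N+1)} with all entries nonnegative such that P A_b = μ E^{cl}(α₁) and P B_b ≤ F^{cl}(x, α₁, α₂, ε). -/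

import Mathlib

open Matrix Finset

noncomputable section

/-- Ordered product `M (k-1) * M (k-2) * ⋯ * M i` (empty product = identity when `k ≤ i`). -/
def mprod {n : ℕ} (M : ℕ → Matrix (Fin n) (Fin n) ℝ) (i k : ℕ) :
    Matrix (Fin n) (Fin n) ℝ :=
  (((List.range' i (k - i)).reverse).map M).prod

def Abar {n m : ℕ} (A : ℕ → Matrix (Fin n) (Fin n) ℝ) (B : ℕ → Matrix (Fin n) (Fin m) ℝ)
    (α₁ : Matrix (Fin m) (Fin n) ℝ) (j : ℕ) : Matrix (Fin n) (Fin n) ℝ :=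
  A j + B j * α₁

def trajCL {n m : ℕ} (A : ℕ → Matrix (Fin n) (Fin n) ℝ) (B : ℕ → Matrix (Fin n) (Fin m) ℝ)
    (α₁ : Matrix (Fin m) (Fin n) ℝ) (α₂ : Fin m → ℝ) (d : ℕ → Fin n → ℝ)
    (x0 : Fin n → ℝ) : ℕ → Fin n → ℝ
  | 0 => x0
  | k + 1 =>
      (A k).mulVec (trajCL A B α₁ α₂ d x0 k)
        + (B k).mulVec (α₁.mulVec (trajCL A B α₁ α₂ d x0 k) + α₂) + d k

def Eblk {n : ℕ} (N : ℕ) (M : ℕ → Matrix (Fin n) (Fin n) ℝ) (k : ℕ) :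
    Matrix (Fin n) (Fin (N + 1) × Fin n) ℝ :=
  Matrix.of fun r jc =>
    if 1 ≤ (jc.1 : ℕ) ∧ (jc.1 : ℕ) ≤ k then mprod M (jc.1 : ℕ) k r jc.2 else 0

def Fblk {n m : ℕ} (A : ℕ → Matrix (Fin n) (Fin n) ℝ) (B : ℕ → Matrix (Fin n) (Fin m) ℝ)
    (α₁ : Matrix (Fin m) (Fin n) ℝ) (α₂ : Fin m → ℝ) (x : Fin n → ℝ) (k : ℕ) : Fin n → ℝ :=
  (mprod (Abar A B α₁) 0 k).mulVec x
    + ∑ i ∈ Finset.range k, (mprod (Abar A B α₁) (i + 1) k * B i).mulVec α₂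

def Ex {n m q : ℕ} (N : ℕ) (A : ℕ → Matrix (Fin n) (Fin n) ℝ)
    (B : ℕ → Matrix (Fin n) (Fin m) ℝ) (G : ℕ → Matrix (Fin q) (Fin n) ℝ)
    (α₁ : Matrix (Fin m) (Fin n) ℝ) :
    Matrix (Fin (N + 1) × Fin q) (Fin (N + 1) × Fin n) ℝ :=
  Matrix.of fun kr jc => (G (kr.1 : ℕ) * Eblk N (Abar A B α₁) (kr.1 : ℕ)) kr.2 jc

def Fx {n m q : ℕ} (N : ℕ) (A : ℕ → Matrix (Fin n) (Fin n) ℝ)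
    (B : ℕ → Matrix (Fin n) (Fin m) ℝ) (G : ℕ → Matrix (Fin q) (Fin n) ℝ)
    (H : ℕ → Fin q → ℝ) (α₁ : Matrix (Fin m) (Fin n) ℝ) (α₂ : Fin m → ℝ)
    (x : Fin n → ℝ) : Fin (N + 1) × Fin q → ℝ :=
  fun kr => H (kr.1 : ℕ) kr.2 - (G (kr.1 : ℕ)).mulVec (Fblk A B α₁ α₂ x (kr.1 : ℕ)) kr.2

def Au (m : ℕ) : Matrix (Fin m ⊕ Fin m) (Fin m) ℝ := Matrix.fromRows 1 (-1)

def Sk {n m : ℕ} (A : ℕ → Matrix (Fin n) (Fin n) ℝ) (B : ℕ → Matrix (Fin n) (Fin m) ℝ)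
    (α₁ : Matrix (Fin m) (Fin n) ℝ) (α₂ : Fin m → ℝ) (x : Fin n → ℝ) (k : ℕ) : Fin m → ℝ :=
  α₁.mulVec (Fblk A B α₁ α₂ x k) + α₂

def Ecl {n m q : ℕ} (N : ℕ) (A : ℕ → Matrix (Fin n) (Fin n) ℝ)
    (B : ℕ → Matrix (Fin n) (Fin m) ℝ) (G : ℕ → Matrix (Fin q) (Fin n) ℝ)
    (α₁ : Matrix (Fin m) (Fin n) ℝ) :
    Matrix ((Fin (N + 1) × Fin q) ⊕ (Fin N × (Fin m ⊕ Fin m))) (Fin (N + 1) × Fin n) ℝ :=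
  Matrix.fromRows (Ex N A B G α₁)
    (Matrix.of fun kr jc => (Au m * α₁ * Eblk N (Abar A B α₁) (kr.1 : ℕ)) kr.2 jc)

def Fcl {n m q : ℕ} (N : ℕ) (A : ℕ → Matrix (Fin n) (Fin n) ℝ)
    (B : ℕ → Matrix (Fin n) (Fin m) ℝ) (G : ℕ → Matrix (Fin q) (Fin n) ℝ)
    (H : ℕ → Fin q → ℝ) (α₁ : Matrix (Fin m) (Fin n) ℝ) (α₂ : Fin m → ℝ)
    (x : Fin n → ℝ) (ε : ℝ) : (Fin (N + 1) × Fin q) ⊕ (Fin N × (Fin m ⊕ Fin m)) → ℝ :=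
  Sum.elim (Fx N A B G H α₁ α₂ x)
    (fun kr => ε - (Au m).mulVec (Sk A B α₁ α₂ x (kr.1 : ℕ)) kr.2)

def AbM (N n : ℕ) :
    Matrix ((Fin (N + 1) × Fin n) ⊕ (Fin (N + 1) × Fin n)) (Fin (N + 1) × Fin n) ℝ :=
  Matrix.fromRows 1 (-1)

def BbV (N n : ℕ) : (Fin (N + 1) × Fin n) ⊕ (Fin (N + 1) × Fin n) → ℝ := fun _ => 1

def trajOL {n m : ℕ} (A : ℕ → Matrix (Fin n) (Fin n) ℝ) (B : ℕ → Matrix (Fin n) (Fin m) ℝ)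
    (u : ℕ → Fin m → ℝ) (d : ℕ → Fin n → ℝ) (x0 : Fin n → ℝ) : ℕ → Fin n → ℝ
  | 0 => x0
  | k + 1 => (A k).mulVec (trajOL A B u d x0 k) + (B k).mulVec (u k) + d k

def Eol {n q : ℕ} (N : ℕ) (A : ℕ → Matrix (Fin n) (Fin n) ℝ)
    (G : ℕ → Matrix (Fin q) (Fin n) ℝ) :
    Matrix (Fin (N + 1) × Fin q) (Fin (N + 1) × Fin n) ℝ :=
  Matrix.of fun kr jc => (G (kr.1 : ℕ) * Eblk N A (kr.1 : ℕ)) kr.2 jc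

def Fol {n m q : ℕ} (N : ℕ) (A : ℕ → Matrix (Fin n) (Fin n) ℝ)
    (B : ℕ → Matrix (Fin n) (Fin m) ℝ) (G : ℕ → Matrix (Fin q) (Fin n) ℝ)
    (H : ℕ → Fin q → ℝ) (x : Fin n → ℝ) (ut : ℕ → Fin m → ℝ) (ε : ℝ) :
    Fin (N + 1) × Fin q → ℝ :=
  fun kr => H (kr.1 : ℕ) kr.2
    - (G (kr.1 : ℕ)).mulVec ((mprod A 0 (kr.1 : ℕ)).mulVec x) kr.2
    - ε * (G (kr.1 : ℕ)).mulVec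
        (∑ i ∈ Finset.range (kr.1 : ℕ), (mprod A (i + 1) (kr.1 : ℕ) * B i).mulVec (ut i)) kr.2

/-!
Unrolling the recursion gives `x(k) = F_k + E_k D`, where `D` stacks the disturbances, so all
constraints together read `E^{cl} D ≤ F^{cl}`. Over the sup-norm ball `‖D‖∞ ≤ μ` the largest
value of row `r` of `E^{cl} D` is `μ ‖E^{cl}_r‖₁`, attained at `μ` times the sign pattern of the
row; robustness is therefore the row condition `μ ‖E^{cl}_r‖₁ ≤ F^{cl}_r`. This is certified by
`P = μ [E⁺, E⁻]` (positive and negative parts of `E^{cl}`); conversely, writing `P = [P⁺, P⁻]`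
with `P⁺ - P⁻ = μ E^{cl}` and both nonnegative, `μ |E^{cl}| ≤ P⁺ + P⁻` entrywise, and summing
over a row gives `μ ‖E^{cl}_r‖₁ ≤ (P B_b)_r`.
-/

section RowBounds

variable {ι κ : Type*} [Fintype ι] (E : Matrix κ ι ℝ) (F : κ → ℝ) {μ : ℝ}

theorem forall_norm_le_mulVec_le_iff (hμ : 0 ≤ μ) :
    (∀ D : ι → ℝ, ‖D‖ ≤ μ → E *ᵥ D ≤ F) ↔ ∀ r, μ * ∑ j, |E r j| ≤ F r := by
  constructor
  · intro h r
    let D : ι → ℝ := fun j => if 0 ≤ E r j then μ else -μ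
    have hD : ‖D‖ ≤ μ := (pi_norm_le_iff_of_nonneg hμ).2 fun j => by
      unfold D; split_ifs <;> simp [abs_of_nonneg hμ]
    calc μ * ∑ j, |E r j| = (E *ᵥ D) r := by
          rw [mulVec, dotProduct, Finset.mul_sum]
          refine Finset.sum_congr rfl fun j _ => ?_
          unfold D
          split_ifs with hj
          · rw [abs_of_nonneg hj, mul_comm]
          · rw [abs_of_neg (not_le.1 hj)]; ring
      _ ≤ F r := h D hD r
  · intro h D hD r
    calc (E *ᵥ D) r = ∑ j, E r j * D j := rfl
      _ ≤ ∑ j, |E r j| * μ := Finset.sum_le_sum fun j _ =>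
          (le_abs_self _).trans <| (abs_mul _ _).trans_le <|
            mul_le_mul_of_nonneg_left ((norm_le_pi_norm D j).trans hD) (abs_nonneg _)
      _ = μ * ∑ j, |E r j| := by rw [Finset.mul_sum]; simp only [mul_comm]
      _ ≤ F r := h r

theorem mulVec_one_apply_eq_sum_add (P : Matrix κ (ι ⊕ ι) ℝ) (r : κ) :
    (P *ᵥ fun _ => 1) r = ∑ j, (P r (Sum.inl j) + P r (Sum.inr j)) := by
  simp [mulVec, dotProduct, Fintype.sum_sum_type, Finset.sum_add_distrib]

variable [DecidableEq ι]

theorem mul_fromRows_one_neg_one_apply (P : Matrix κ (ι ⊕ ι) ℝ) (r : κ) (j : ι) :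
    (P * (fromRows 1 (-1) : Matrix (ι ⊕ ι) ι ℝ)) r j
      = P r (Sum.inl j) - P r (Sum.inr j) := by
  rw [mul_apply, Fintype.sum_sum_type]
  simp [one_apply, sub_eq_add_neg]

theorem row_bound_of_certificate (hμ : 0 ≤ μ) {P : Matrix κ (ι ⊕ ι) ℝ}
    (hP : ∀ i j, 0 ≤ P i j) (hPE : P * (fromRows 1 (-1) : Matrix (ι ⊕ ι) ι ℝ) = μ • E)
    (hPF : P *ᵥ (fun _ => 1) ≤ F) (r : κ) : μ * ∑ j, |E r j| ≤ F r := by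
  have hrow (j : ι) : μ * E r j = P r (Sum.inl j) - P r (Sum.inr j) := by
    rw [← mul_fromRows_one_neg_one_apply, hPE, Matrix.smul_apply, smul_eq_mul]
  calc μ * ∑ j, |E r j| = ∑ j, |P r (Sum.inl j) - P r (Sum.inr j)| := by
        simp only [Finset.mul_sum, ← hrow, abs_mul, abs_of_nonneg hμ]
    _ ≤ ∑ j, (P r (Sum.inl j) + P r (Sum.inr j)) := Finset.sum_le_sum fun j _ =>
        (abs_sub _ _).trans_eq (by rw [abs_of_nonneg (hP r _), abs_of_nonneg (hP r _)])
    _ = (P *ᵥ fun _ => 1) r := (mulVec_one_apply_eq_sum_add P r).symm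
    _ ≤ F r := hPF r

def rowSplitCertificate (μ : ℝ) : Matrix κ (ι ⊕ ι) ℝ :=
  of fun r => Sum.elim (fun j => μ * max (E r j) 0) (fun j => μ * max (-E r j) 0)

theorem exists_certificate_iff (hμ : 0 ≤ μ) :
    (∃ P : Matrix κ (ι ⊕ ι) ℝ, (∀ i j, 0 ≤ P i j) ∧
        P * (fromRows 1 (-1) : Matrix (ι ⊕ ι) ι ℝ) = μ • E ∧ P *ᵥ (fun _ => 1) ≤ F) ↔
      ∀ r, μ * ∑ j, |E r j| ≤ F r := by
  refine ⟨fun ⟨P, hP, hPE, hPF⟩ => row_bound_of_certificate E F hμ hP hPE hPF, fun h => ?_⟩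
  refine ⟨rowSplitCertificate E μ, ?_, ?_, fun r => ?_⟩
  · rintro r (j | j) <;> exact mul_nonneg hμ (le_max_right _ _)
  · ext r j
    rw [mul_fromRows_one_neg_one_apply]
    simp [rowSplitCertificate, ← mul_sub]
  · simpa [mulVec_one_apply_eq_sum_add, rowSplitCertificate, ← mul_add,
      max_zero_add_max_neg_zero_eq_abs_self, ← Finset.mul_sum] using h r

end RowBounds

theorem mprod_of_le {n : ℕ} {M : ℕ → Matrix (Fin n) (Fin n) ℝ} {i k : ℕ} (h : k ≤ i) :
    mprod M i k = 1 := by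
  simp [mprod, Nat.sub_eq_zero_of_le h]

theorem mprod_succ {n : ℕ} {M : ℕ → Matrix (Fin n) (Fin n) ℝ} {i k : ℕ} (h : i ≤ k) :
    mprod M i (k + 1) = M k * mprod M i k := by
  have hlen : k + 1 - i = k - i + 1 := by omega
  have hend : i + (k - i) = k := by omega
  simp [mprod, hlen, List.range'_concat, hend]

section Trajectory

variable {n m : ℕ} (A : ℕ → Matrix (Fin n) (Fin n) ℝ) (B : ℕ → Matrix (Fin n) (Fin m) ℝ)
  (α₁ : Matrix (Fin m) (Fin n) ℝ) (α₂ : Fin m → ℝ) (d : ℕ → Fin n → ℝ) (x : Fin n → ℝ)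

theorem trajCL_succ (k : ℕ) :
    trajCL A B α₁ α₂ d x (k + 1)
      = Abar A B α₁ k *ᵥ trajCL A B α₁ α₂ d x k + (B k *ᵥ α₂ + d k) := by
  rw [trajCL, mulVec_add, Abar, add_mulVec, ← mulVec_mulVec]
  abel

theorem trajCL_eq_sum (k : ℕ) :
    trajCL A B α₁ α₂ d x k = mprod (Abar A B α₁) 0 k *ᵥ x
      + ∑ i ∈ range k, mprod (Abar A B α₁) (i + 1) k *ᵥ (B i *ᵥ α₂ + d i) := by
  induction k with
  | zero => simp [trajCL, mprod_of_le]
  | succ k ih =>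
    have hshift : ∀ i ∈ range k, Abar A B α₁ k *ᵥ (mprod (Abar A B α₁) (i + 1) k *ᵥ
        (B i *ᵥ α₂ + d i)) = mprod (Abar A B α₁) (i + 1) (k + 1) *ᵥ (B i *ᵥ α₂ + d i) :=
      fun i hi => by rw [mulVec_mulVec, mprod_succ (by simp at hi; omega)]
    rw [trajCL_succ, ih, mulVec_add, mulVec_sum, sum_congr rfl hshift, mulVec_mulVec,
      ← mprod_succ k.zero_le, sum_range_succ, mprod_of_le le_rfl, one_mulVec]
    abel

end Trajectory

/-- The disturbances `d 0, …, d (N - 1)` stacked into the column space of `Eblk`: block `0`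
is zero, matching the leading `0_n` block of `E_k`, and block `j + 1` holds `d j`. -/
def stackDist (N : ℕ) {n : ℕ} (d : ℕ → Fin n → ℝ) : Fin (N + 1) × Fin n → ℝ :=
  fun jc => Fin.cases 0 (fun j : Fin N => d j) jc.1 jc.2

theorem Eblk_mulVec_stackDist {n N k : ℕ} (M : ℕ → Matrix (Fin n) (Fin n) ℝ) (hk : k ≤ N)
    (d : ℕ → Fin n → ℝ) :
    Eblk N M k *ᵥ stackDist N d = ∑ i ∈ range k, mprod M (i + 1) k *ᵥ d i := by
  ext r
  have hrange : (range N).filter (· < k) = range k := by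
    ext i; simp; omega
  calc (Eblk N M k *ᵥ stackDist N d) r
      = ∑ i : Fin N, if (i : ℕ) < k then (mprod M (i + 1) k *ᵥ d i) r else 0 := by
        simp [mulVec, dotProduct, Fintype.sum_prod_type, Fin.sum_univ_succ, stackDist, Eblk,
          Nat.succ_le_iff, ite_mul, sum_ite_irrel]
    _ = ∑ i ∈ range N, if i < k then (mprod M (i + 1) k *ᵥ d i) r else 0 :=
        Fin.sum_univ_eq_sum_range (fun i => if i < k then (mprod M (i + 1) k *ᵥ d i) r else 0) N
    _ = (∑ i ∈ range k, mprod M (i + 1) k *ᵥ d i) r := by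
        rw [← sum_filter, hrange, Finset.sum_apply]

theorem norm_stackDist_le {n N : ℕ} {d : ℕ → Fin n → ℝ} {μ : ℝ} (hμ : 0 ≤ μ)
    (hd : ∀ i, i < N → ‖d i‖ ≤ μ) : ‖stackDist N d‖ ≤ μ := by
  refine (pi_norm_le_iff_of_nonneg hμ).2 fun ⟨j, c⟩ => ?_
  cases j using Fin.cases with
  | zero => simpa [stackDist] using hμ
  | succ j => exact (norm_le_pi_norm (d j) c).trans (hd j j.isLt)

theorem forall_stackDist_mulVec_le_iff {κ : Type*} {n N : ℕ}
    (E : Matrix κ (Fin (N + 1) × Fin n) ℝ) (hE : ∀ r c, E r (0, c) = 0) (F : κ → ℝ) {μ : ℝ}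
    (hμ : 0 ≤ μ) :
    (∀ d : ℕ → Fin n → ℝ, (∀ i, i < N → ‖d i‖ ≤ μ) → E *ᵥ stackDist N d ≤ F) ↔
      ∀ D, ‖D‖ ≤ μ → E *ᵥ D ≤ F := by
  refine ⟨fun h D hD => ?_, fun h d hd => h _ (norm_stackDist_le hμ hd)⟩
  let d : ℕ → Fin n → ℝ := fun i c => if hi : i < N then D (Fin.succ ⟨i, hi⟩, c) else 0
  have hstack : E *ᵥ stackDist N d = E *ᵥ D := by
    ext r
    simp [mulVec, dotProduct, Fintype.sum_prod_type, Fin.sum_univ_succ, hE, stackDist, d]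
    rfl
  have hd (i : ℕ) (hi : i < N) : ‖d i‖ ≤ μ := (pi_norm_le_iff_of_nonneg hμ).2 fun c => by
    simpa [d, hi] using (norm_le_pi_norm D _).trans hD
  exact hstack ▸ h d hd

theorem forall_Au_mulVec_le_iff {m : ℕ} (v : Fin m → ℝ) {ε : ℝ} (hε : 0 ≤ ε) :
    (∀ s, (Au m *ᵥ v) s ≤ ε) ↔ ‖v‖ ≤ ε := by
  simp only [Au, fromRows_mulVec, one_mulVec, neg_mulVec, Sum.forall, Sum.elim_inl,
    Sum.elim_inr, pi_norm_le_iff_of_nonneg hε, Real.norm_eq_abs, abs_le, Pi.neg_apply,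
    neg_le, ← forall_and]
  exact forall_congr' fun _ => and_comm

section ClosedLoop

variable {n m q N : ℕ} (A : ℕ → Matrix (Fin n) (Fin n) ℝ) (B : ℕ → Matrix (Fin n) (Fin m) ℝ)
  (G : ℕ → Matrix (Fin q) (Fin n) ℝ) (H : ℕ → Fin q → ℝ) (α₁ : Matrix (Fin m) (Fin n) ℝ)
  (α₂ : Fin m → ℝ) (d : ℕ → Fin n → ℝ) (x : Fin n → ℝ) (ε : ℝ)

theorem trajCL_eq_Fblk_add_Eblk_mulVec {k : ℕ} (hk : k ≤ N) :
    trajCL A B α₁ α₂ d x k = Fblk A B α₁ α₂ x k + Eblk N (Abar A B α₁) k *ᵥ stackDist N d := by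
  rw [trajCL_eq_sum, Eblk_mulVec_stackDist _ hk, Fblk]
  simp only [mulVec_add, mulVec_mulVec, sum_add_distrib]
  abel

theorem Ecl_apply_zero (row : (Fin (N + 1) × Fin q) ⊕ (Fin N × (Fin m ⊕ Fin m)))
    (c : Fin n) : Ecl N A B G α₁ row (0, c) = 0 := by
  rcases row with ⟨k, r⟩ | ⟨k, s⟩ <;> simp [Ecl, Ex, mul_apply, Eblk]

theorem Ecl_mulVec_stackDist_le_Fcl_inl_iff (k : Fin (N + 1)) (r : Fin q) :
    (Ecl N A B G α₁ *ᵥ stackDist N d) (Sum.inl (k, r)) ≤ Fcl N A B G H α₁ α₂ x ε (Sum.inl (k, r))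
      ↔ (G k *ᵥ trajCL A B α₁ α₂ d x k) r ≤ H k r := by
  rw [trajCL_eq_Fblk_add_Eblk_mulVec A B α₁ α₂ d x k.is_le, mulVec_add, Pi.add_apply,
    ← le_sub_iff_add_le', mulVec_mulVec]
  rfl

theorem Ecl_mulVec_stackDist_le_Fcl_inr_iff (k : Fin N) (s : Fin m ⊕ Fin m) :
    (Ecl N A B G α₁ *ᵥ stackDist N d) (Sum.inr (k, s)) ≤ Fcl N A B G H α₁ α₂ x ε (Sum.inr (k, s))
      ↔ (Au m *ᵥ (α₁ *ᵥ trajCL A B α₁ α₂ d x k + α₂)) s ≤ ε := by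
  change ((Au m * α₁ * Eblk N (Abar A B α₁) k) *ᵥ stackDist N d) s
      ≤ ε - (Au m *ᵥ (α₁ *ᵥ Fblk A B α₁ α₂ x k + α₂)) s ↔ _
  rw [le_sub_iff_add_le, trajCL_eq_Fblk_add_Eblk_mulVec A B α₁ α₂ d x k.is_lt.le]
  simp only [mulVec_add, ← mulVec_mulVec, Pi.add_apply]
  ring_nf

end ClosedLoop

theorem closedLoop_constraints_iff {n m q N : ℕ} (A : ℕ → Matrix (Fin n) (Fin n) ℝ)
    (B : ℕ → Matrix (Fin n) (Fin m) ℝ) (G : ℕ → Matrix (Fin q) (Fin n) ℝ)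
    (H : ℕ → Fin q → ℝ) (α₁ : Matrix (Fin m) (Fin n) ℝ) (α₂ : Fin m → ℝ)
    (d : ℕ → Fin n → ℝ) (x : Fin n → ℝ) {ε : ℝ} (hε : 0 ≤ ε) :
    ((∀ k, k ≤ N → G k *ᵥ trajCL A B α₁ α₂ d x k ≤ H k) ∧
        (∀ k, k < N → ‖α₁ *ᵥ trajCL A B α₁ α₂ d x k + α₂‖ ≤ ε)) ↔
      Ecl N A B G α₁ *ᵥ stackDist N d ≤ Fcl N A B G H α₁ α₂ x ε := by
  rw [Pi.le_def, Sum.forall]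
  refine and_congr ⟨fun h ⟨k, r⟩ => ?_, fun h k hk r => ?_⟩ ⟨fun h ⟨k, s⟩ => ?_, fun h k hk => ?_⟩
  · exact (Ecl_mulVec_stackDist_le_Fcl_inl_iff A B G H α₁ α₂ d x ε k r).2 (h k k.is_le r)
  · exact (Ecl_mulVec_stackDist_le_Fcl_inl_iff A B G H α₁ α₂ d x ε ⟨k, Nat.lt_succ_of_le hk⟩
      r).1 (h _)
  · exact (Ecl_mulVec_stackDist_le_Fcl_inr_iff A B G H α₁ α₂ d x ε k s).2
      ((forall_Au_mulVec_le_iff _ hε).2 (h k k.isLt) s)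
  · exact (forall_Au_mulVec_le_iff _ hε).1 fun s =>
      (Ecl_mulVec_stackDist_le_Fcl_inr_iff A B G H α₁ α₂ d x ε ⟨k, hk⟩ s).1 (h _)

/-- State-and-input robust condition ↔ Farkas certificate, for the closed-loop LTV system
with linear controller `u(k) = α₁ x(k) + α₂`, polytopic specification
`G_k x(k) ≤ H_k` for `k = 0, …, N`, input bound `‖α₁ x(k) + α₂‖∞ ≤ ε` for
`k = 0, …, N-1`, and disturbances with `‖d(i)‖∞ ≤ μ`. -/
theorem resilience_effort_farkas {n m q N : ℕ}
    (A : ℕ → Matrix (Fin n) (Fin n) ℝ) (B : ℕ → Matrix (Fin n) (Fin m) ℝ)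
    (G : ℕ → Matrix (Fin q) (Fin n) ℝ) (H : ℕ → Fin q → ℝ)
    (x : Fin n → ℝ) (μ ε : ℝ) (hμ : 0 ≤ μ) (hε : 0 ≤ ε)
    (α₁ : Matrix (Fin m) (Fin n) ℝ) (α₂ : Fin m → ℝ) :
    (∀ d : ℕ → Fin n → ℝ, (∀ i, i < N → ‖d i‖ ≤ μ) →
        (∀ k, k ≤ N → (G k).mulVec (trajCL A B α₁ α₂ d x k) ≤ H k) ∧
        (∀ k, k < N → ‖α₁.mulVec (trajCL A B α₁ α₂ d x k) + α₂‖ ≤ ε)) ↔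
      (∃ P : Matrix ((Fin (N + 1) × Fin q) ⊕ (Fin N × (Fin m ⊕ Fin m)))
          ((Fin (N + 1) × Fin n) ⊕ (Fin (N + 1) × Fin n)) ℝ,
        (∀ i j, 0 ≤ P i j) ∧
        P * AbM N n = μ • Ecl N A B G α₁ ∧
        P.mulVec (BbV N n) ≤ Fcl N A B G H α₁ α₂ x ε) := by
  simp only [closedLoop_constraints_iff A B G H α₁ α₂ _ x hε]
  rw [forall_stackDist_mulVec_le_iff _ (Ecl_apply_zero A B G α₁) _ hμ,
    forall_norm_le_mulVec_le_iff _ _ hμ]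
  exact (exists_certificate_iff _ _ hμ).symm
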